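/- arXiv:2604.10068 — 2 statements merged into one kernel-verified Lean document; each statement's English description precedes it below -/
import Mathlib

section
/- Let γ > 0 and a > 1, and define R(ε) = ε(2γ − aε)/(4γ − 2ε) for ε ∈ (0, 2γ/a). Set ε_max = 2γ(1 − √((a−1)/a)). Then ε_max ∈ (0, 2γ/a), R(ε) ≤ R(ε_max) for every ε ∈ (0, 2γ/a), and moreover R(γ/a) = γ/(4a − 2). -/
theorem dms_rate_optimization (γ a : ℝ) (hγ : 0 < γ) (ha : 1 < a) :
    2 * γ * (1 - Real.sqrt ((a - 1) / a)) ∈ Set.Ioo 0 (2 * γ / a) ∧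
    (∀ ε ∈ Set.Ioo (0 : ℝ) (2 * γ / a),
      ε * (2 * γ - a * ε) / (4 * γ - 2 * ε) ≤
        (2 * γ * (1 - Real.sqrt ((a - 1) / a))) *
            (2 * γ - a * (2 * γ * (1 - Real.sqrt ((a - 1) / a)))) /
          (4 * γ - 2 * (2 * γ * (1 - Real.sqrt ((a - 1) / a))))) ∧
    (γ / a) * (2 * γ - a * (γ / a)) / (4 * γ - 2 * (γ / a)) = γ / (4 * a - 2) := by
  have ha0 : (0:ℝ) < a := by linarith
  set s := Real.sqrt ((a - 1) / a) with hsdef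
  have hnn : (0:ℝ) ≤ (a - 1) / a := div_nonneg (by linarith) ha0.le
  have hs2 : s ^ 2 = (a - 1) / a := Real.sq_sqrt hnn
  have has2 : a * s ^ 2 = a - 1 := by
    rw [hs2]; field_simp
  have hs0 : 0 < s := Real.sqrt_pos.mpr (div_pos (by linarith) ha0)
  have hlt1 : (a - 1) / a < 1 := by rw [div_lt_one ha0]; linarith
  have hs1 : s < 1 := by nlinarith
  refine ⟨⟨by nlinarith, ?_⟩, ?_, ?_⟩
  · rw [lt_div_iff₀ ha0]
    nlinarith [mul_pos hγ hs0]
  · rintro ε ⟨hε0, hε1⟩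
    have hε1' : ε * a < 2 * γ := by rwa [lt_div_iff₀ ha0] at hε1
    have hε2 : ε < 2 * γ := by nlinarith
    have hd1 : 0 < 4 * γ - 2 * ε := by linarith
    have hd2 : 0 < 4 * γ - 2 * (2 * γ * (1 - s)) := by nlinarith [mul_pos hγ hs0]
    rw [div_le_div_iff₀ hd1 hd2]
    have key : 2 * γ * (1 - s) * (2 * γ - a * (2 * γ * (1 - s))) * (4 * γ - 2 * ε)
        - ε * (2 * γ - a * ε) * (4 * γ - 2 * (2 * γ * (1 - s)))
        = 4 * γ * a * s * (ε - 2 * γ * (1 - s)) ^ 2 := by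
      linear_combination (16 * γ ^ 3 - 8 * γ ^ 2 * ε - 16 * γ ^ 3 * s) * has2
    nlinarith [mul_nonneg (mul_nonneg (mul_nonneg (by linarith : (0:ℝ) ≤ 4 * γ) ha0.le)
      hs0.le) (sq_nonneg (ε - 2 * γ * (1 - s)))]
  · have h1 : (4:ℝ) * a - 2 ≠ 0 := by nlinarith
    have h2 : 4 * γ - 2 * (γ / a) ≠ 0 := by
      have : 0 < 4 * γ - 2 * (γ / a) := by
        have : γ / a < γ := by rw [div_lt_iff₀ ha0]; nlinarith
        linarith
      linarith
    rw [div_eq_div_iff h2 (by nlinarith : (4:ℝ) * a - 2 ≠ 0)] <;> try skip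
    field_simp
    ring
end

section
/- Explicit coercivity of the hypocoercive dissipation matrix: let m > 0 and K ≥ 0, and set c = √(2 + K/(2m)), γ = √(16m + 2K), ζ = γ/(2√m) + c, a = 2 + ζ², ε = γ/a, and λ_coer = √m / (4(√(2 + K/(2m)) + √(4 + K/(2m)))). Then for all real α, β: (γ − ε)α² − εζ·αβ + (ε/2)β² ≥ λ_coer (α² + β²). -/
theorem explicit_coercivity_dissipation_matrix (m K : ℝ) (hm : 0 < m) (hK : 0 ≤ K) :
    let c := Real.sqrt (2 + K / (2 * m))
    let γ := Real.sqrt (16 * m + 2 * K)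
    let ζ := γ / (2 * Real.sqrt m) + c
    let a := 2 + ζ ^ 2
    let ε := γ / a
    let lamCoer := Real.sqrt m /
      (4 * (Real.sqrt (2 + K / (2 * m)) + Real.sqrt (4 + K / (2 * m))))
    ∀ α β : ℝ,
      lamCoer * (α ^ 2 + β ^ 2) ≤
        (γ - ε) * α ^ 2 - ε * ζ * (α * β) + ε / 2 * β ^ 2 := by
  intro c γ ζ a ε lamCoer α β
  set s := Real.sqrt m with hs_def
  set v := Real.sqrt (4 + K / (2 * m)) with hv_def
  have hspos : 0 < s := Real.sqrt_pos.mpr hm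
  have hs2 : s ^ 2 = m := Real.sq_sqrt hm.le
  have hcnn : 0 ≤ c := Real.sqrt_nonneg _
  have harg : 0 ≤ 2 + K / (2 * m) := by positivity
  have hc2 : c ^ 2 = 2 + K / (2 * m) := Real.sq_sqrt harg
  have hvpos : 0 < v := Real.sqrt_pos.mpr (by positivity)
  have hv2 : v ^ 2 = 4 + K / (2 * m) := Real.sq_sqrt (by positivity)
  have hmne : m ≠ 0 := hm.ne'
  have hγ : γ = 2 * s * v := by
    have h : 16 * m + 2 * K = (2 * s * v) ^ 2 := by
      have : v ^ 2 * (2 * m) = 4 * (2 * m) + K := by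
        rw [hv2]; field_simp
      nlinarith [hs2]
    rw [show γ = Real.sqrt (16 * m + 2 * K) from rfl, h,
      Real.sqrt_sq (by positivity)]
  have hζ : ζ = v + c := by
    show γ / (2 * s) + c = v + c
    rw [hγ]; field_simp
  have hζpos : 0 < ζ := by rw [hζ]; positivity
  have ha : a = 2 * v * ζ := by
    show 2 + ζ ^ 2 = 2 * v * ζ
    rw [hζ]; nlinarith [hc2, hv2]
  have hε : ε = s / ζ := by
    show γ / a = s / ζ
    rw [hγ, ha]; field_simp
    try ring
  have hεpos : 0 < ε := by rw [hε]; positivity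
  have hane : a ≠ 0 := by rw [ha]; positivity
  have hγε : γ = ε * (2 + ζ ^ 2) := by
    have : ε * a = γ := div_mul_cancel₀ _ hane
    rw [← this]
  have hlam : lamCoer = ε / 4 := by
    show s / (4 * (c + v)) = ε / 4
    rw [hε, hζ]
    rw [show c + v = v + c from add_comm c v]
    field_simp
    try exact Or.inl (by ring)
  rw [hlam, hγε]
  nlinarith [mul_nonneg hεpos.le (sq_nonneg (ζ * α - β / 2)),
    mul_nonneg hεpos.le (sq_nonneg α)]
end
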